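/- Let ‖·‖ be an orthogonally invariant matrix norm on ℝ^{m×n} with dual ‖·‖_*, and f : ℝ^{m×n} → ℝ continuously differentiable, bounded below by f_min, with gradients L-Lipschitz with respect to ‖·‖. Consider preconditioned spectral descent iterates X_{k+1} = X_k − α_k ⟨G_k, D_k⟩ D_k where at each iteration k the stochastic mapping is p_k(σ) = E_k/‖diag(E_k)‖, with the entries of E_k ∈ ℝ^r i.i.d. samples of a fixed probability distribution supported on (0, ∞), drawn independently across iterations and independently of the algorithmic history. Then with constant step size α_k = η/L for any η ∈ (0, 2), almost surely there is a finite random constant C such that for all K ≥ 1, min_{0 ≤ k < K} ‖G_k‖_*² ≤ C/K. -/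

import Mathlib

/-!
Write `G_k = U_k Σ_k V_kᵀ` and `a_k = ⟨G_k, D_k⟩ = ∑ᵢ σ_{k,i} E_{k,i} / N(diag E_k)`.
Since `N(D_k) ≤ 1`, the descent lemma for `L`-smooth functions gives
`f(X_{k+1}) ≤ f(X_k) - η(2-η)/(2L) a_k²`, so `∑ₖ a_k² < ∞`. By orthogonal invariance and
equivalence of norms, `‖G_k‖_* ≤ C ∑ᵢ σ_{k,i}`; if moreover every `E_{k,i} ≥ ρ N(diag E_k)`
("iteration `k` is good"), then `a_k ≥ ρ ∑ᵢ σ_{k,i}`, hence `‖G_k‖_*² ≤ (C/ρ)² a_k²`.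
Whether iteration `k` is good depends only on `E_k`, so these are i.i.d. events, of positive
probability once `ρ` is small; by the strong law of large numbers almost surely a fraction
`≥ q/2 > 0` of the first `K` iterations is good, and the smallest `a_k²` among them is
`≤ 2 ∑ₖ a_k² / (qK)`.
-/

open scoped Matrix
open Filter MeasureTheory

attribute [local instance] Matrix.normedAddCommGroup Matrix.normedSpace

/-- The Frobenius (trace) inner product `⟨A, B⟩ = tr(AᵀB) = ∑ᵢⱼ Aᵢⱼ Bᵢⱼ`. -/
def frobInner {m n : ℕ} (A B : Matrix (Fin m) (Fin n) ℝ) : ℝ :=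
  ∑ i, ∑ j, A i j * B i j

/-- The `m × n` rectangular diagonal matrix with the entries of `σ ∈ ℝ^{min m n}` on the
diagonal. -/
def rectDiag (m n : ℕ) (σ : Fin (Nat.min m n) → ℝ) : Matrix (Fin m) (Fin n) ℝ :=
  Matrix.of fun i j =>
    if h : (i : ℕ) = (j : ℕ) ∧ (i : ℕ) < Nat.min m n then σ ⟨i, h.2⟩ else 0

/-- The dual norm `‖V‖_* = sup {⟨U, V⟩ : N U ≤ 1}` of a norm `N` on `ℝ^{m×n}`. -/
noncomputable def dualNorm {m n : ℕ} (N : Matrix (Fin m) (Fin n) ℝ → ℝ)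
    (V : Matrix (Fin m) (Fin n) ℝ) : ℝ :=
  sSup ((fun U => frobInner U V) '' {U | N U ≤ 1})

open Topology
open scoped NNReal

namespace Seminorm

variable {E : Type*} [NormedAddCommGroup E] [NormedSpace ℝ E] (p : Seminorm ℝ E)

lemma continuous_of_finiteDimensional [FiniteDimensional ℝ E] : Continuous p :=
  continuousOn_univ.mp (p.convexOn.continuousOn isOpen_univ)

lemma exists_norm_le_mul_of_finiteDimensional [FiniteDimensional ℝ E]
    (hp : ∀ x, p x = 0 → x = 0) : ∃ C : ℝ≥0, ∀ x, ‖x‖ ≤ C * p x := by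
  have hpos : ∀ x, x ≠ 0 → 0 < p x := fun x hx =>
    (apply_nonneg p x).lt_of_ne fun h => hx (hp x h.symm)
  obtain ⟨C, hC⟩ := (isCompact_sphere (0 : E) 1).exists_bound_of_continuousOn
    (p.continuous_of_finiteDimensional.continuousOn.inv₀ fun x hx =>
      (hpos x (by rintro rfl; simp at hx)).ne')
  refine ⟨C.toNNReal, fun x => ?_⟩
  rcases eq_or_ne x 0 with rfl | hx
  · simp
  have hx' : 0 < ‖x‖ := norm_pos_iff.mpr hx
  have hbound := hC (‖x‖⁻¹ • x) (by simp [norm_smul, hx'.ne'])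
  have hscale : p (‖x‖⁻¹ • x) = ‖x‖⁻¹ * p x := by rw [map_smul_eq_mul, norm_inv, norm_norm]
  rw [Pi.inv_apply, hscale, norm_inv, Real.norm_of_nonneg (by positivity), mul_inv, inv_inv,
    ← div_eq_mul_inv, div_le_iff₀ (hpos x hx)] at hbound
  exact hbound.trans (mul_le_mul_of_nonneg_right (Real.le_coe_toNNReal C) (apply_nonneg p x))

variable {p} {C : ℝ≥0}

lemma pos_of_norm_le_mul (hC : ∀ x, ‖x‖ ≤ C * p x) {x : E} (hx : x ≠ 0) : 0 < p x :=
  (apply_nonneg p x).lt_of_ne fun h => hx (norm_le_zero_iff.mp (by simpa [← h] using hC x))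

end Seminorm

section SpectralDescent

variable {m n : ℕ}

lemma frobInner_comm (A B : Matrix (Fin m) (Fin n) ℝ) : frobInner A B = frobInner B A := by
  simp only [frobInner, mul_comm]

lemma frobInner_eq_trace (A B : Matrix (Fin m) (Fin n) ℝ) : frobInner A B = (Aᵀ * B).trace := by
  simp only [frobInner, Matrix.trace, Matrix.diag, Matrix.mul_apply, Matrix.transpose_apply]
  exact Finset.sum_comm

lemma frobInner_mul_mul_transpose {m' n' : ℕ} (U : Matrix (Fin m) (Fin m') ℝ)
    (V : Matrix (Fin n) (Fin n') ℝ) (A : Matrix (Fin m') (Fin n') ℝ)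
    (B : Matrix (Fin m) (Fin n) ℝ) :
    frobInner (U * A * Vᵀ) B = frobInner A (Uᵀ * B * V) := by
  simp only [frobInner_eq_trace, Matrix.transpose_mul, Matrix.transpose_transpose,
    Matrix.mul_assoc]
  rw [Matrix.trace_mul_comm]
  simp only [Matrix.mul_assoc]

lemma frobInner_smul_left (c : ℝ) (A B : Matrix (Fin m) (Fin n) ℝ) :
    frobInner (c • A) B = c * frobInner A B := by
  simp only [frobInner, Matrix.smul_apply, smul_eq_mul, Finset.mul_sum, mul_assoc]

lemma frobInner_smul_right (c : ℝ) (A B : Matrix (Fin m) (Fin n) ℝ) :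
    frobInner A (c • B) = c * frobInner A B := by
  rw [frobInner_comm, frobInner_smul_left, frobInner_comm]

lemma frobInner_sub_left (A B C : Matrix (Fin m) (Fin n) ℝ) :
    frobInner (A - B) C = frobInner A C - frobInner B C := by
  simp only [frobInner, Matrix.sub_apply, sub_mul, Finset.sum_sub_distrib]

lemma frobInner_le_norm_mul (A B : Matrix (Fin m) (Fin n) ℝ) :
    frobInner A B ≤ ‖A‖ * ∑ i, ∑ j, |B i j| := by
  simp only [frobInner, Finset.mul_sum]
  refine Finset.sum_le_sum fun i _ => Finset.sum_le_sum fun j _ => ?_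
  calc A i j * B i j ≤ |A i j| * |B i j| := by rw [← abs_mul]; exact le_abs_self _
    _ ≤ ‖A‖ * |B i j| := by gcongr; exact Matrix.norm_entry_le_entrywise_sup_norm A

lemma rectDiag_smul (c : ℝ) (σ : Fin (Nat.min m n) → ℝ) :
    rectDiag m n (c • σ) = c • rectDiag m n σ := by
  ext i j
  simp only [rectDiag, Matrix.of_apply, Matrix.smul_apply, Pi.smul_apply]
  split <;> simp

lemma continuous_rectDiag : Continuous (rectDiag m n) := by
  refine continuous_pi fun i => continuous_pi fun j => ?_
  by_cases h : (i : ℕ) = j ∧ (i : ℕ) < Nat.min m n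
  · simpa only [rectDiag, Matrix.of_apply, dif_pos h] using continuous_apply _
  · simpa only [rectDiag, Matrix.of_apply, dif_neg h] using continuous_const

lemma rectDiag_eq_sum_single (σ : Fin (Nat.min m n) → ℝ) :
    rectDiag m n σ = ∑ k, Matrix.single (Fin.castLE (Nat.min_le_left m n) k)
      (Fin.castLE (Nat.min_le_right m n) k) (σ k) := by
  ext i j
  simp only [rectDiag, Matrix.of_apply, Matrix.sum_apply, Matrix.single_apply]
  split_ifs with h
  · rw [Finset.sum_eq_single ⟨i, h.2⟩]
    · simp [Fin.ext_iff, h.1]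
    · intro k _ hk
      rw [if_neg]
      rintro ⟨hi, -⟩
      exact hk (Fin.ext (by simp [← hi]))
    · simp
  · refine (Finset.sum_eq_zero fun k _ => if_neg ?_).symm
    rintro ⟨rfl, rfl⟩
    exact h ⟨rfl, k.isLt⟩

lemma frobInner_rectDiag (A : Matrix (Fin m) (Fin n) ℝ) (σ : Fin (Nat.min m n) → ℝ) :
    frobInner A (rectDiag m n σ) = ∑ k, A (Fin.castLE (Nat.min_le_left m n) k)
      (Fin.castLE (Nat.min_le_right m n) k) * σ k := by
  simp only [rectDiag_eq_sum_single, frobInner, Matrix.sum_apply, Matrix.single_apply,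
    Finset.mul_sum, mul_ite, mul_zero, ite_and]
  conv_lhs => enter [2, i]; rw [Finset.sum_comm]
  rw [Finset.sum_comm]
  simp

lemma rectDiag_apply_castLE (σ : Fin (Nat.min m n) → ℝ) (k : Fin (Nat.min m n)) :
    rectDiag m n σ (Fin.castLE (Nat.min_le_left m n) k) (Fin.castLE (Nat.min_le_right m n) k)
      = σ k := by
  simp [rectDiag, k.isLt.trans_le (Nat.min_le_right m n)]

section DualNorm

variable (p : Seminorm ℝ (Matrix (Fin m) (Fin n) ℝ))

lemma dualNorm_le {B : Matrix (Fin m) (Fin n) ℝ} {b : ℝ}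
    (h : ∀ U, p U ≤ 1 → frobInner U B ≤ b) : dualNorm p B ≤ b :=
  csSup_le ⟨_, 0, by simp, rfl⟩ fun _ ⟨U, hU, hUB⟩ => hUB ▸ h U hU

variable {p} {C : ℝ≥0} (hC : ∀ A, ‖A‖ ≤ C * p A)
include hC

lemma bddAbove_frobInner_image_unitBall (B : Matrix (Fin m) (Fin n) ℝ) :
    BddAbove ((fun U => frobInner U B) '' {U | p U ≤ 1}) := by
  refine ⟨C * ∑ i, ∑ j, |B i j|, ?_⟩
  rintro _ ⟨U, hU, rfl⟩
  refine (frobInner_le_norm_mul U B).trans (mul_le_mul_of_nonneg_right ?_ (by positivity))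
  exact (hC U).trans (mul_le_of_le_one_right C.2 hU)

lemma frobInner_le_dualNorm {U : Matrix (Fin m) (Fin n) ℝ} (hU : p U ≤ 1)
    (B : Matrix (Fin m) (Fin n) ℝ) : frobInner U B ≤ dualNorm p B :=
  le_csSup (bddAbove_frobInner_image_unitBall hC B) ⟨U, hU, rfl⟩

lemma dualNorm_nonneg (B : Matrix (Fin m) (Fin n) ℝ) : 0 ≤ dualNorm p B := by
  simpa [frobInner] using frobInner_le_dualNorm hC (U := 0) (by simp) B

lemma frobInner_le_mul_dualNorm (A B : Matrix (Fin m) (Fin n) ℝ) :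
    frobInner A B ≤ p A * dualNorm p B := by
  rcases eq_or_ne A 0 with rfl | hA
  · simp [frobInner]
  · have hA := p.pos_of_norm_le_mul hC hA
    have hU : p ((p A)⁻¹ • A) ≤ 1 := by
      rw [map_smul_eq_mul, Real.norm_of_nonneg (by positivity), inv_mul_cancel₀ hA.ne']
    have := frobInner_le_dualNorm hC hU B
    rwa [frobInner_smul_left, inv_mul_le_iff₀ hA] at this

end DualNorm

section OrthogonallyInvariant

variable {p : Seminorm ℝ (Matrix (Fin m) (Fin n) ℝ)}
  (hinv : ∀ (U : Matrix (Fin m) (Fin m) ℝ) (V : Matrix (Fin n) (Fin n) ℝ) A,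
    U * Uᵀ = 1 → V * Vᵀ = 1 → p (U * A * Vᵀ) = p A)
  {U : Matrix (Fin m) (Fin m) ℝ} {V : Matrix (Fin n) (Fin n) ℝ}
  (hU : U * Uᵀ = 1) (hV : V * Vᵀ = 1)

include hU hV

lemma frobInner_svd (σ τ : Fin (Nat.min m n) → ℝ) :
    frobInner (U * rectDiag m n σ * Vᵀ) (U * rectDiag m n τ * Vᵀ) = ∑ k, σ k * τ k := by
  have hUU : Uᵀ * U = 1 := mul_eq_one_comm.mp hU
  have hVV : Vᵀ * V = 1 := mul_eq_one_comm.mp hV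
  rw [frobInner_mul_mul_transpose, ← Matrix.mul_assoc, ← Matrix.mul_assoc, hUU,
    Matrix.one_mul, Matrix.mul_assoc, hVV, Matrix.mul_one, frobInner_comm, frobInner_rectDiag]
  simp only [rectDiag_apply_castLE, mul_comm]

include hinv

lemma seminorm_normalized_svd_le_one (e : Fin (Nat.min m n) → ℝ) :
    p (U * rectDiag m n (fun i => e i / p (rectDiag m n e)) * Vᵀ) ≤ 1 := by
  have he : (fun i => e i / p (rectDiag m n e)) = (p (rectDiag m n e))⁻¹ • e := by
    ext i; simp [div_eq_inv_mul]
  rw [hinv _ _ _ hU hV, he, rectDiag_smul, map_smul_eq_mul, norm_inv,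
    Real.norm_of_nonneg (apply_nonneg _ _), inv_mul_eq_div]
  exact div_self_le_one _

variable {C : ℝ≥0} (hC : ∀ A, ‖A‖ ≤ C * p A)
include hC

lemma dualNorm_svd_le {σ : Fin (Nat.min m n) → ℝ} (hσ : ∀ k, 0 ≤ σ k) :
    dualNorm p (U * rectDiag m n σ * Vᵀ) ≤ C * ∑ k, σ k := by
  have hUU : Uᵀ * Uᵀᵀ = 1 := by rw [Matrix.transpose_transpose]; exact mul_eq_one_comm.mp hU
  have hVV : Vᵀ * Vᵀᵀ = 1 := by rw [Matrix.transpose_transpose]; exact mul_eq_one_comm.mp hV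
  refine dualNorm_le p fun W hW => ?_
  set W' := Uᵀ * W * V
  have hW' : ‖W'‖ ≤ C := by
    have := hinv Uᵀ Vᵀ W hUU hVV
    rw [Matrix.transpose_transpose] at this
    exact (hC W').trans (this ▸ mul_le_of_le_one_right C.2 hW)
  rw [frobInner_comm, frobInner_mul_mul_transpose, frobInner_comm, frobInner_rectDiag,
    Finset.mul_sum]
  refine Finset.sum_le_sum fun k _ => mul_le_mul_of_nonneg_right ?_ (hσ k)
  exact (le_abs_self _).trans ((Matrix.norm_entry_le_entrywise_sup_norm W' ..).trans hW')

lemma dualNorm_sq_le_of_forall_mul_le {σ : Fin (Nat.min m n) → ℝ} (hσ : ∀ k, 0 ≤ σ k)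
    {e : Fin (Nat.min m n) → ℝ} (he : ∀ k, 0 < e k) {ρ : ℝ} (hρ : 0 < ρ)
    (hgood : ∀ k, ρ * p (rectDiag m n e) ≤ e k) :
    dualNorm p (U * rectDiag m n σ * Vᵀ) ^ 2 ≤ (C / ρ) ^ 2 *
      frobInner (U * rectDiag m n σ * Vᵀ)
        (U * rectDiag m n (fun i => e i / p (rectDiag m n e)) * Vᵀ) ^ 2 := by
  rw [frobInner_svd hU hV]
  have hsum : ρ * ∑ k, σ k ≤ ∑ k, σ k * (e k / p (rectDiag m n e)) := by
    rw [Finset.mul_sum]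
    refine Finset.sum_le_sum fun k _ => ?_
    have hdiag : rectDiag m n e ≠ 0 := fun h =>
      (he k).ne' (by simpa [h] using (rectDiag_apply_castLE e k).symm)
    rw [mul_comm ρ]
    exact mul_le_mul_of_nonneg_left
      ((le_div_iff₀ (p.pos_of_norm_le_mul hC hdiag)).mpr (hgood k)) (hσ k)
  have hdual : dualNorm p (U * rectDiag m n σ * Vᵀ)
      ≤ C / ρ * ∑ k, σ k * (e k / p (rectDiag m n e)) := by
    refine (dualNorm_svd_le hinv hU hV hC hσ).trans ?_
    rw [div_mul_eq_mul_div, le_div_iff₀ hρ, mul_assoc, mul_comm _ ρ]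
    exact mul_le_mul_of_nonneg_left hsum C.2
  rw [← mul_pow]
  exact pow_le_pow_left₀ (dualNorm_nonneg hC _) hdual 2

end OrthogonallyInvariant

section Descent

variable {p : Seminorm ℝ (Matrix (Fin m) (Fin n) ℝ)} {C : ℝ≥0} (hC : ∀ A, ‖A‖ ≤ C * p A)
  {f : Matrix (Fin m) (Fin n) ℝ → ℝ} {grad : Matrix (Fin m) (Fin n) ℝ → Matrix (Fin m) (Fin n) ℝ}
  {Df : Matrix (Fin m) (Fin n) ℝ → (Matrix (Fin m) (Fin n) ℝ →L[ℝ] ℝ)}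
  (hDf : ∀ X, HasFDerivAt f (Df X) X) (hDf_grad : ∀ X H, Df X H = frobInner (grad X) H)
  {L : ℝ} (hLip : ∀ X Y, dualNorm p (grad X - grad Y) ≤ L * p (X - Y))
include hC hDf hDf_grad hLip

lemma le_add_frobInner_add_sq (X Δ : Matrix (Fin m) (Fin n) ℝ) :
    f (X + Δ) ≤ f X + frobInner (grad X) Δ + L / 2 * p Δ ^ 2 := by
  let φ : ℝ → ℝ := fun t => f (X + t • Δ) - t * frobInner (grad X) Δ - L / 2 * t ^ 2 * p Δ ^ 2
  have hφ : ∀ t, HasDerivAt φ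
      (frobInner (grad (X + t • Δ)) Δ - frobInner (grad X) Δ - L * t * p Δ ^ 2) t := by
    intro t
    have hline : HasDerivAt (fun t : ℝ => X + t • Δ) Δ t :=
      (((hasDerivAt_id t).smul_const Δ).const_add X).congr_deriv (one_smul ℝ Δ)
    have hf : HasDerivAt (fun t : ℝ => f (X + t • Δ)) (frobInner (grad (X + t • Δ)) Δ) t :=
      ((hDf (X + t • Δ)).comp_hasDerivAt t hline).congr_deriv (hDf_grad _ _)
    exact ((hf.sub ((hasDerivAt_id t).mul_const (frobInner (grad X) Δ))).sub
      (((hasDerivAt_pow 2 t).const_mul (L / 2)).mul_const (p Δ ^ 2))).congr_deriv (by ring)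
  have hφ' : ∀ t ∈ Set.Ioo (0 : ℝ) 1,
      frobInner (grad (X + t • Δ)) Δ - frobInner (grad X) Δ - L * t * p Δ ^ 2 ≤ 0 := by
    intro t ht
    rw [sub_nonpos, ← frobInner_sub_left, frobInner_comm]
    calc frobInner Δ (grad (X + t • Δ) - grad X)
        ≤ p Δ * dualNorm p (grad (X + t • Δ) - grad X) := frobInner_le_mul_dualNorm hC _ _
      _ ≤ p Δ * (L * p (t • Δ)) := by
          gcongr
          simpa using hLip (X + t • Δ) X
      _ = L * t * p Δ ^ 2 := by
          rw [map_smul_eq_mul, Real.norm_of_nonneg ht.1.le]; ring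
  have hanti : AntitoneOn φ (Set.Icc 0 1) := by
    refine antitoneOn_of_hasDerivWithinAt_nonpos (convex_Icc 0 1)
      (fun t _ => (hφ t).continuousAt.continuousWithinAt) (fun t _ => (hφ t).hasDerivWithinAt) ?_
    simpa only [interior_Icc] using hφ'
  have h01 : φ 1 ≤ φ 0 := hanti (by simp) (by simp) zero_le_one
  simp only [φ, one_smul, zero_smul, add_zero] at h01
  linarith

lemma le_sub_sq_of_normalized_step (hL : 0 < L) (η : ℝ) {X D : Matrix (Fin m) (Fin n) ℝ}
    (hD : p D ≤ 1) :
    f (X - (η / L * frobInner (grad X) D) • D)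
      ≤ f X - η * (2 - η) / (2 * L) * frobInner (grad X) D ^ 2 := by
  set a := frobInner (grad X) D
  have h := le_add_frobInner_add_sq hC hDf hDf_grad hLip X (-(η / L * a) • D)
  rw [frobInner_smul_right, map_smul_eq_mul, Real.norm_eq_abs, mul_pow, sq_abs, neg_sq,
    neg_smul, ← sub_eq_add_neg] at h
  have hD2 : p D ^ 2 ≤ 1 := pow_le_one₀ (apply_nonneg _ _) hD
  calc f (X - (η / L * a) • D)
      ≤ f X + -(η / L * a) * a + L / 2 * ((η / L * a) ^ 2 * p D ^ 2) := h
    _ ≤ f X + -(η / L * a) * a + L / 2 * (η / L * a) ^ 2 := by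
        gcongr; exact mul_le_of_le_one_right (sq_nonneg _) hD2
    _ = f X - η * (2 - η) / (2 * L) * a ^ 2 := by field_simp; ring

end Descent

end SpectralDescent

open Finset in
lemma sum_sq_le_of_descent {F a : ℕ → ℝ} {κ b : ℝ} (hκ : 0 < κ)
    (hstep : ∀ k, F (k + 1) ≤ F k - κ * a k ^ 2) (hb : ∀ k, b ≤ F k) (K : ℕ) :
    ∑ k ∈ range K, a k ^ 2 ≤ (F 0 - b) / κ := by
  have htel : ∀ K, F K + κ * ∑ k ∈ range K, a k ^ 2 ≤ F 0 := by
    intro K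
    induction K with
    | zero => simp
    | succ K ih => rw [sum_range_succ, mul_add]; linarith [hstep K]
  rw [le_div_iff₀ hκ]
  linarith [htel K, hb K]

open Finset in
lemma exists_le_div_of_tendsto_frequency {g a : ℕ → ℝ} {P : ℕ → Prop} [DecidablePred P]
    {B M q : ℝ} (hB : ∀ K, ∑ k ∈ range K, a k ^ 2 ≤ B) (hM : 0 ≤ M)
    (hg : ∀ k, P k → g k ≤ M * a k ^ 2) (hq : 0 < q)
    (hfreq : Tendsto (fun K : ℕ => (#{k ∈ range K | P k} : ℝ) / K) atTop (𝓝 q)) :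
    ∃ C, ∀ K : ℕ, 1 ≤ K → ∃ k < K, g k ≤ C / K := by
  obtain ⟨K₀, hK₀⟩ := eventually_atTop.mp (hfreq.eventually (eventually_ge_nhds (half_lt_self hq)))
  have hB0 : 0 ≤ B := by simpa using hB 0
  -- the first term serves `K ≥ K₀`, where `q K / 2` of the indices below `K` satisfy `P`;
  -- the second serves `K < K₀` through `k = 0`
  refine ⟨max (2 * M * B / q) (K₀ * |g 0|), fun K hK => ?_⟩
  have hKpos : (0 : ℝ) < K := by exact_mod_cast hK
  rcases lt_or_ge K K₀ with hlt | hge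
  · refine ⟨0, hK, ?_⟩
    rw [le_div_iff₀ hKpos]
    calc g 0 * K ≤ |g 0| * K₀ :=
          mul_le_mul (le_abs_self _) (by exact_mod_cast hlt.le) hKpos.le (abs_nonneg _)
      _ ≤ _ := by rw [mul_comm]; exact le_max_right _ _
  set S := {k ∈ range K | P k}
  have hS : q / 2 * K ≤ #S := (le_div_iff₀ hKpos).mp (hK₀ K hge)
  have hSpos : (0 : ℝ) < #S := lt_of_lt_of_le (by positivity) hS
  obtain ⟨k, hkS, hk⟩ : ∃ k ∈ S, a k ^ 2 ≤ B / #S := by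
    refine exists_le_of_sum_le (card_pos.mp (by exact_mod_cast hSpos)) ?_
    rw [sum_const, nsmul_eq_mul, mul_div_cancel₀ _ hSpos.ne']
    exact (sum_le_sum_of_subset_of_nonneg (filter_subset _ _) fun _ _ _ => sq_nonneg _).trans
      (hB K)
  obtain ⟨hkK, hPk⟩ := mem_filter.mp hkS
  refine ⟨k, mem_range.mp hkK, ?_⟩
  calc g k ≤ M * a k ^ 2 := hg k hPk
    _ ≤ M * (B / (q / 2 * K)) := by gcongr; exact hk.trans (by gcongr)
    _ = 2 * M * B / q / K := by field_simp
    _ ≤ _ := by gcongr; exact le_max_left _ _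

section Probability

open ProbabilityTheory

variable {Ω : Type*} {m0 : MeasurableSpace Ω} {μ : Measure Ω}

section Rows

variable {ι κ β : Type*} [Fintype κ] [MeasurableSpace β] {E : ι → Ω → κ → β}
  (hmeas : ∀ k i, Measurable fun ω => E k ω i)
  (hindep : iIndepFun (fun (ki : ι × κ) ω => E ki.1 ω ki.2) μ)
include hmeas hindep

lemma identDistrib_of_iIndepFun_uncurry {ν : Measure β}
    (hident : ∀ k i, μ.map (fun ω => E k ω i) = ν) (j k : ι) :
    IdentDistrib (E j) (E k) μ μ := by
  have hlaw : ∀ k, μ.map (E k) = Measure.pi fun _ => ν := fun k => by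
    simpa [hident] using (hindep.precomp (Prod.mk_right_injective k)).map_fun_eq_pi_map
      fun i => (hmeas k i).aemeasurable
  exact ⟨(measurable_pi_lambda _ (hmeas j)).aemeasurable,
    (measurable_pi_lambda _ (hmeas k)).aemeasurable, by rw [hlaw, hlaw]⟩

lemma indepFun_of_iIndepFun_uncurry {j k : ι} (hjk : j ≠ k) : IndepFun (E j) (E k) μ := by
  classical
  have hdisj : Disjoint ({j} ×ˢ Finset.univ : Finset (ι × κ)) ({k} ×ˢ Finset.univ) :=
    Finset.disjoint_product.mpr (Or.inl (Finset.disjoint_singleton.mpr hjk))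
  have hrow : ∀ l : ι, Measurable fun (v : ({l} ×ˢ Finset.univ : Finset (ι × κ)) → β) (i : κ) =>
      v ⟨(l, i), by simp⟩ :=
    fun l => measurable_pi_lambda _ fun i => measurable_pi_apply _
  exact (hindep.indepFun_finset _ _ hdisj fun ki => hmeas ki.1 ki.2).comp (hrow j) (hrow k)

end Rows

open Finset in
lemma tendsto_frequency_ae [IsProbabilityMeasure μ] {β : Type*} [MeasurableSpace β]
    {W : ℕ → Ω → β} (hW : Measurable (W 0)) (hindep : Pairwise fun j k => IndepFun (W j) (W k) μ)
    (hident : ∀ k, IdentDistrib (W k) (W 0) μ μ) {S : Set β} [DecidablePred (· ∈ S)]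
    (hS : MeasurableSet S) :
    ∀ᵐ ω ∂μ, Tendsto (fun K : ℕ => (#{k ∈ range K | W k ω ∈ S} : ℝ) / K) atTop
      (𝓝 (μ.real (W 0 ⁻¹' S))) := by
  have hind : Measurable (S.indicator fun _ => (1 : ℝ)) := measurable_const.indicator hS
  have hslln := strong_law_ae_real (fun k ω => S.indicator (fun _ => (1 : ℝ)) (W k ω))
    ((integrable_const (1 : ℝ)).indicator (hW hS))
    (fun j k hjk => (hindep hjk).comp hind hind) (fun k => (hident k).comp hind)
  have hmean : ∫ ω, S.indicator (fun _ => (1 : ℝ)) (W 0 ω) ∂μ = μ.real (W 0 ⁻¹' S) :=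
    integral_indicator_one (hW hS)
  filter_upwards [hslln] with ω hω
  rw [hmean] at hω
  simpa only [Set.indicator_apply, sum_boole] using hω

lemma measurableSet_setOf_forall_mul_le {κ : Type*} [Countable κ] (ρ : ℝ) {g : (κ → ℝ) → ℝ}
    (hg : Measurable g) : MeasurableSet {e : κ → ℝ | ∀ i, ρ * g e ≤ e i} := by
  simp only [Set.ofPred_forall]
  exact MeasurableSet.iInter fun i => measurableSet_le (hg.const_mul ρ) (measurable_pi_apply i)

lemma exists_pos_measure_forall_mul_le [NeZero μ] {κ : Type*} [Finite κ] (W : Ω → κ → ℝ)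
    (g : Ω → ℝ) (hpos : ∀ᵐ ω ∂μ, ∀ i, 0 < W ω i) :
    ∃ ρ > 0, μ {ω | ∀ i, ρ * g ω ≤ W ω i} ≠ 0 := by
  by_contra! h
  have hnull : μ (⋃ j : ℕ, {ω | ∀ i, 1 / ((j : ℝ) + 1) * g ω ≤ W ω i}) = 0 :=
    measure_iUnion_null fun j => h _ (by positivity)
  have hcover : ∀ᵐ ω ∂μ, ω ∈ ⋃ j : ℕ, {ω | ∀ i, 1 / ((j : ℝ) + 1) * g ω ≤ W ω i} := by
    filter_upwards [hpos] with ω hω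
    have hsmall : Tendsto (fun j : ℕ => 1 / ((j : ℝ) + 1) * g ω) atTop (𝓝 0) := by
      simpa using tendsto_one_div_add_atTop_nhds_zero_nat.mul_const (g ω)
    obtain ⟨j, hj⟩ := (eventually_all.mpr fun i => hsmall.eventually_le_const (hω i)).exists
    exact Set.mem_iUnion.mpr ⟨j, hj⟩
  obtain ⟨ω, hω, hω'⟩ := (hcover.and (measure_eq_zero_iff_ae_notMem.mp hnull)).exists
  exact hω' hω

end Probability

theorem stmt5_general {m n : ℕ}
    {Ω : Type*} {m0 : MeasurableSpace Ω} (μ : Measure Ω) [IsProbabilityMeasure μ]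
    (N : Matrix (Fin m) (Fin n) ℝ → ℝ)
    -- `N` is a norm:
    (hN_add : ∀ A B, N (A + B) ≤ N A + N B)
    (hN_smul : ∀ (c : ℝ) A, N (c • A) = |c| * N A)
    (hN_def : ∀ A, N A = 0 ↔ A = 0)
    -- `N` is orthogonally invariant:
    (hN_inv : ∀ (U : Matrix (Fin m) (Fin m) ℝ) (V : Matrix (Fin n) (Fin n) ℝ)
      (A : Matrix (Fin m) (Fin n) ℝ), U * Uᵀ = 1 → V * Vᵀ = 1 → N (U * A * Vᵀ) = N A)
    (f : Matrix (Fin m) (Fin n) ℝ → ℝ)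
    (grad : Matrix (Fin m) (Fin n) ℝ → Matrix (Fin m) (Fin n) ℝ)
    (Df : Matrix (Fin m) (Fin n) ℝ → (Matrix (Fin m) (Fin n) ℝ →L[ℝ] ℝ))
    -- `f` is continuously differentiable with gradient `grad` (Frobenius inner product):
    (hDf : ∀ X, HasFDerivAt f (Df X) X)
    (hDf_grad : ∀ X H, Df X H = frobInner (grad X) H)
    -- `f` is bounded below by `fmin`:
    (fmin : ℝ) (hfmin : ∀ X, fmin ≤ f X)
    -- gradients are `L`-Lipschitz with respect to `N`:
    (L : ℝ) (hL : 0 < L)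
    (hLip : ∀ X Y, dualNorm N (grad X - grad Y) ≤ L * N (X - Y))
    -- the random vectors `E_k` with i.i.d. entries from a fixed distribution `ν` on `(0, ∞)`:
    (E : ℕ → Ω → Fin (Nat.min m n) → ℝ)
    (ν : Measure ℝ)
    (hE_pos : ∀ᵐ ω ∂μ, ∀ k i, 0 < E k ω i)
    (hE_meas : ∀ (k : ℕ) (i : Fin (Nat.min m n)), Measurable fun ω => E k ω i)
    -- the entries are i.i.d. across coordinates and iterations:
    (hE_indep : ProbabilityTheory.iIndepFun
      (fun (ki : ℕ × Fin (Nat.min m n)) ω => E ki.1 ω ki.2) μ)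
    (hE_ident : ∀ k i, Measure.map (fun ω => E k ω i) μ = ν)
    -- step size `α_k = η/L` with `η ∈ (0, 2)`:
    (η : ℝ) (hη : η ∈ Set.Ioo (0 : ℝ) 2)
    -- the iterates (deterministic start, so the `E_k` are independent of the history):
    (X : ℕ → Ω → Matrix (Fin m) (Fin n) ℝ)
    (U : ℕ → Ω → Matrix (Fin m) (Fin m) ℝ) (V : ℕ → Ω → Matrix (Fin n) (Fin n) ℝ)
    (σ : ℕ → Ω → Fin (Nat.min m n) → ℝ)
    (hU : ∀ k ω, U k ω * (U k ω)ᵀ = 1) (hV : ∀ k ω, V k ω * (V k ω)ᵀ = 1)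
    (hσ : ∀ k ω i, 0 < σ k ω i)
    (hSVD : ∀ k ω, grad (X k ω) = U k ω * rectDiag m n (σ k ω) * (V k ω)ᵀ)
    -- the update direction uses `p_k(σ) = E_k / ‖diag(E_k)‖`:
    (D : ℕ → Ω → Matrix (Fin m) (Fin n) ℝ)
    (hD : ∀ k ω, D k ω =
      U k ω * rectDiag m n (fun i => E k ω i / N (rectDiag m n (E k ω))) * (V k ω)ᵀ)
    (hX : ∀ k ω, X (k + 1) ω =
      X k ω - (η / L * frobInner (grad (X k ω)) (D k ω)) • D k ω) :
    ∀ᵐ ω ∂μ, ∃ C : ℝ, ∀ K : ℕ, 1 ≤ K → ∃ k < K,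
      dualNorm N (grad (X k ω)) ^ 2 ≤ C / K := by
  classical
  let p : Seminorm ℝ (Matrix (Fin m) (Fin n) ℝ) := Seminorm.of N hN_add hN_smul
  obtain ⟨C, hC⟩ := p.exists_norm_le_mul_of_finiteDimensional fun A => (hN_def A).1
  have hκ : 0 < η * (2 - η) / (2 * L) := div_pos (mul_pos hη.1 (sub_pos.mpr hη.2)) (by positivity)
  obtain ⟨ρ, hρ, hgood⟩ := exists_pos_measure_forall_mul_le (μ := μ) (E 0)
    (fun ω => N (rectDiag m n (E 0 ω))) (hE_pos.mono fun ω h => h 0)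
  have hgood_meas := measurableSet_setOf_forall_mul_le ρ
    (p.continuous_of_finiteDimensional.comp continuous_rectDiag).measurable
  have hfreq := tendsto_frequency_ae (measurable_pi_lambda _ (hE_meas 0))
    (fun j k hjk => indepFun_of_iIndepFun_uncurry hE_meas hE_indep hjk)
    (fun k => identDistrib_of_iIndepFun_uncurry hE_meas hE_indep hE_ident k 0) hgood_meas
  filter_upwards [hE_pos, hfreq] with ω hEω hfreqω
  have hDp : ∀ k, p (D k ω) ≤ 1 := fun k =>
    hD k ω ▸ seminorm_normalized_svd_le_one hN_inv (hU k ω) (hV k ω) (E k ω)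
  refine exists_le_div_of_tendsto_frequency (a := fun k => frobInner (grad (X k ω)) (D k ω))
    (sum_sq_le_of_descent hκ (fun k => ?_) fun k => hfmin (X k ω)) (sq_nonneg (C / ρ))
    (fun k hk => ?_) (ENNReal.toReal_pos hgood (measure_ne_top μ _)) hfreqω
  · rw [hX k ω]
    exact le_sub_sq_of_normalized_step hC hDf hDf_grad hLip hL η (hDp k)
  · rw [hSVD, hD]
    exact dualNorm_sq_le_of_forall_mul_le hN_inv (hU k ω) (hV k ω) hC (fun i => (hσ k ω i).le)
      (hEω k) hρ hk

/-- Convergence of random spectral descent (Kaon): with the spectral mapping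
`p_k(σ) = E_k / ‖diag(E_k)‖`, where the entries of the `E_k ∈ ℝ^r` are i.i.d. samples of a
fixed distribution supported on `(0, ∞)`, drawn independently across iterations and
independently of the algorithmic history (the initial point is deterministic), and constant
step size `α_k = η/L`, `η ∈ (0,2)`, almost surely there is a finite constant `C` with
`min_{k<K} ‖G_k‖_*² ≤ C/K` for all `K ≥ 1`. -/
theorem stmt5 {m n : ℕ}
    {Ω : Type*} {m0 : MeasurableSpace Ω} (μ : Measure Ω) [IsProbabilityMeasure μ]
    (N : Matrix (Fin m) (Fin n) ℝ → ℝ)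
    -- `N` is a norm:
    (hN_add : ∀ A B, N (A + B) ≤ N A + N B)
    (hN_smul : ∀ (c : ℝ) A, N (c • A) = |c| * N A)
    (hN_def : ∀ A, N A = 0 ↔ A = 0)
    -- `N` is orthogonally invariant:
    (hN_inv : ∀ (U : Matrix (Fin m) (Fin m) ℝ) (V : Matrix (Fin n) (Fin n) ℝ)
      (A : Matrix (Fin m) (Fin n) ℝ), U * Uᵀ = 1 → V * Vᵀ = 1 → N (U * A * Vᵀ) = N A)
    (f : Matrix (Fin m) (Fin n) ℝ → ℝ)
    (grad : Matrix (Fin m) (Fin n) ℝ → Matrix (Fin m) (Fin n) ℝ)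
    (Df : Matrix (Fin m) (Fin n) ℝ → (Matrix (Fin m) (Fin n) ℝ →L[ℝ] ℝ))
    -- `f` is continuously differentiable with gradient `grad` (Frobenius inner product):
    (hDf : ∀ X, HasFDerivAt f (Df X) X)
    (hDf_grad : ∀ X H, Df X H = frobInner (grad X) H)
    (hgrad_cont : Continuous grad)
    -- `f` is bounded below by `fmin`:
    (fmin : ℝ) (hfmin : ∀ X, fmin ≤ f X)
    -- gradients are `L`-Lipschitz with respect to `N`:
    (L : ℝ) (hL : 0 < L)
    (hLip : ∀ X Y, dualNorm N (grad X - grad Y) ≤ L * N (X - Y))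
    -- the random vectors `E_k` with i.i.d. entries from a fixed distribution `ν` on `(0, ∞)`:
    (E : ℕ → Ω → Fin (Nat.min m n) → ℝ)
    (ν : Measure ℝ) [IsProbabilityMeasure ν] (hν : ν (Set.Ioi (0 : ℝ)) = 1)
    (hE_pos : ∀ᵐ ω ∂μ, ∀ k i, 0 < E k ω i)
    (hE_meas : ∀ (k : ℕ) (i : Fin (Nat.min m n)), Measurable fun ω => E k ω i)
    -- the entries are i.i.d. across coordinates and iterations:
    (hE_indep : ProbabilityTheory.iIndepFun
      (fun (ki : ℕ × Fin (Nat.min m n)) ω => E ki.1 ω ki.2) μ)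
    (hE_ident : ∀ k i, Measure.map (fun ω => E k ω i) μ = ν)
    -- step size `α_k = η/L` with `η ∈ (0, 2)`:
    (η : ℝ) (hη : η ∈ Set.Ioo (0 : ℝ) 2)
    -- the iterates (deterministic start, so the `E_k` are independent of the history):
    (X : ℕ → Ω → Matrix (Fin m) (Fin n) ℝ)
    (X0 : Matrix (Fin m) (Fin n) ℝ) (hX0 : ∀ ω, X 0 ω = X0)
    (U : ℕ → Ω → Matrix (Fin m) (Fin m) ℝ) (V : ℕ → Ω → Matrix (Fin n) (Fin n) ℝ)
    (σ : ℕ → Ω → Fin (Nat.min m n) → ℝ)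
    (hU : ∀ k ω, U k ω * (U k ω)ᵀ = 1) (hV : ∀ k ω, V k ω * (V k ω)ᵀ = 1)
    (hσ : ∀ k ω i, 0 < σ k ω i)
    (hSVD : ∀ k ω, grad (X k ω) = U k ω * rectDiag m n (σ k ω) * (V k ω)ᵀ)
    -- the update direction uses `p_k(σ) = E_k / ‖diag(E_k)‖`:
    (D : ℕ → Ω → Matrix (Fin m) (Fin n) ℝ)
    (hD : ∀ k ω, D k ω =
      U k ω * rectDiag m n (fun i => E k ω i / N (rectDiag m n (E k ω))) * (V k ω)ᵀ)
    (hX : ∀ k ω, X (k + 1) ω =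
      X k ω - (η / L * frobInner (grad (X k ω)) (D k ω)) • D k ω) :
    ∀ᵐ ω ∂μ, ∃ C : ℝ, ∀ K : ℕ, 1 ≤ K → ∃ k < K,
      dualNorm N (grad (X k ω)) ^ 2 ≤ C / K :=
  stmt5_general (m0 := m0) μ N hN_add hN_smul hN_def hN_inv f grad Df hDf hDf_grad fmin hfmin L hL
    hLip E ν hE_pos hE_meas hE_indep hE_ident η hη X U V σ hU hV hσ hSVD D hD hX
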